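/- arXiv:2404.14197 — 2 statements merged into one kernel-verified Lean document; each statement's English description precedes it below -/
import Mathlib

section
/- Let M be a positive integer and let f : [0,1]^M → ℝ be a function. Then f is continuous if and only if there exist continuous functions ρ : ℝ^(2M+1) → ℝ and φ : ℝ → ℝ^(2M+1) and real coefficients λ₁, …, λ_M such that for every (x₁, …, x_M) ∈ [0,1]^M, f(x₁, …, x_M) = ρ(∑_{m=1}^{M} λ_m · φ(x_m)), where the scalar multiplication λ_m · φ(x_m) and the sum are taken componentwise in ℝ^(2M+1). -/
open Finset in
/-- Sums of distinct powers of two determine the index set. -/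
lemma twoPow_sum_inj {M : ℕ} {A B : Finset (Fin M)}
    (h : ∑ m ∈ A, (2:ℝ) ^ (m : ℕ) = ∑ m ∈ B, (2:ℝ) ^ (m : ℕ)) : A = B := by
  have hA : ∑ m ∈ A, (2:ℝ) ^ (m : ℕ) = ((∑ i ∈ A.image Fin.val, 2 ^ i : ℕ) : ℝ) := by
    rw [Finset.sum_image (fun a _ b _ h => Fin.val_injective h)]
    push_cast; rfl
  have hB : ∑ m ∈ B, (2:ℝ) ^ (m : ℕ) = ((∑ i ∈ B.image Fin.val, 2 ^ i : ℕ) : ℝ) := by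
    rw [Finset.sum_image (fun a _ b _ h => Fin.val_injective h)]
    push_cast; rfl
  rw [hA, hB, Nat.cast_inj] at h
  have himg : A.image Fin.val = B.image Fin.val := Finset.geomSum_injective le_rfl h
  ext m
  constructor <;> intro hm
  · have : (m : ℕ) ∈ B.image Fin.val := himg ▸ Finset.mem_image_of_mem _ hm
    obtain ⟨b, hb, hbe⟩ := Finset.mem_image.1 this
    rwa [← Fin.val_injective hbe]
  · have : (m : ℕ) ∈ A.image Fin.val := himg ▸ Finset.mem_image_of_mem _ hm
    obtain ⟨b, hb, hbe⟩ := Finset.mem_image.1 this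
    rwa [← Fin.val_injective hbe]

/-- Grouping a weighted power sum by the values of `x`. -/
lemma weighted_pow_sum_fiberwise {M : ℕ} (x : Fin M → ℝ) (s : Finset ℝ)
    (hs : ∀ m, x m ∈ s) (k : ℕ) :
    ∑ v ∈ s, (∑ m ∈ Finset.univ.filter (fun m => x m = v), (2:ℝ) ^ (m : ℕ)) * v ^ k
      = ∑ m : Fin M, (2:ℝ) ^ (m : ℕ) * x m ^ k := by
  rw [← Finset.sum_fiberwise_of_maps_to (g := x) (fun m _ => hs m)
      (fun m : Fin M => (2:ℝ) ^ (m : ℕ) * x m ^ k)]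
  refine Finset.sum_congr rfl fun v _ => ?_
  rw [Finset.sum_mul]
  refine Finset.sum_congr rfl fun m hm => ?_
  rw [(Finset.mem_filter.1 hm).2]

/-- Key injectivity: the moment map with weights `2^m` is injective. -/
lemma moment_map_inj {M : ℕ} (x y : Fin M → ℝ)
    (h : ∀ k : Fin (2 * M + 1),
      ∑ m : Fin M, (2:ℝ) ^ (m : ℕ) * x m ^ (k : ℕ) = ∑ m : Fin M, (2:ℝ) ^ (m : ℕ) * y m ^ (k : ℕ)) :
    x = y := by
  classical
  set s : Finset ℝ := Finset.univ.image x ∪ Finset.univ.image y with hs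
  have hxs : ∀ m, x m ∈ s := fun m =>
    Finset.mem_union_left _ (Finset.mem_image_of_mem _ (Finset.mem_univ m))
  have hys : ∀ m, y m ∈ s := fun m =>
    Finset.mem_union_right _ (Finset.mem_image_of_mem _ (Finset.mem_univ m))
  have hcard : s.card ≤ 2 * M + 1 := by
    calc s.card ≤ (Finset.univ.image x).card + (Finset.univ.image y).card :=
          Finset.card_union_le _ _
      _ ≤ M + M := Nat.add_le_add
          ((Finset.card_image_le).trans (by simp))
          ((Finset.card_image_le).trans (by simp))
      _ ≤ 2 * M + 1 := by omega
  set n := s.card with hn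
  set e : Fin n ≃o s := s.orderIsoOfFin rfl with he
  set w : ℝ → ℝ := fun v => ∑ m ∈ Finset.univ.filter (fun m => x m = v), (2:ℝ) ^ (m : ℕ)
  set wy : ℝ → ℝ := fun v => ∑ m ∈ Finset.univ.filter (fun m => y m = v), (2:ℝ) ^ (m : ℕ)
  set c : Fin n → ℝ := fun i => w (e i) - wy (e i) with hc
  -- c annihilates the Vandermonde matrix
  have hcv : Matrix.vecMul c (Matrix.vandermonde (fun i => ((e i : ℝ)))) = 0 := by
    funext k
    have hk : (k : ℕ) < 2 * M + 1 := lt_of_lt_of_le k.2 hcard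
    have hmom := h ⟨k, hk⟩
    have hsum : ∀ z : Fin M → ℝ, (∀ m, z m ∈ s) →
        ∑ i : Fin n, (∑ m ∈ Finset.univ.filter (fun m => z m = (e i : ℝ)), (2:ℝ) ^ (m : ℕ))
            * (e i : ℝ) ^ (k : ℕ)
          = ∑ m : Fin M, (2:ℝ) ^ (m : ℕ) * z m ^ (k : ℕ) := by
      intro z hz
      rw [← weighted_pow_sum_fiberwise z s hz (k : ℕ)]
      rw [← Finset.sum_attach s (fun v =>
        (∑ m ∈ Finset.univ.filter (fun m => z m = v), (2:ℝ) ^ (m : ℕ)) * v ^ (k : ℕ))]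
      exact (Equiv.sum_comp e.toEquiv (fun v : s =>
        (∑ m ∈ Finset.univ.filter (fun m => z m = (v : ℝ)), (2:ℝ) ^ (m : ℕ))
          * (v : ℝ) ^ (k : ℕ)))
    have hvm : Matrix.vecMul c (Matrix.vandermonde (fun i => ((e i : ℝ)))) k
        = ∑ i : Fin n, c i * (e i : ℝ) ^ (k : ℕ) := by
      simp [Matrix.vecMul, dotProduct, Matrix.vandermonde]
    rw [Pi.zero_apply, hvm]
    simp only [hc, sub_mul]
    rw [Finset.sum_sub_distrib, hsum x hxs, hsum y hys, hmom, sub_self]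
  -- Vandermonde with distinct nodes is invertible
  have hdet : (Matrix.vandermonde (fun i : Fin n => ((e i : ℝ)))).det ≠ 0 := by
    rw [Matrix.det_vandermonde_ne_zero_iff]
    intro i j hij
    exact e.injective (Subtype.ext hij)
  have hc0 : c = 0 := by
    have hunit : IsUnit (Matrix.vandermonde (fun i : Fin n => ((e i : ℝ)))) := by
      rw [Matrix.isUnit_iff_isUnit_det]
      exact isUnit_iff_ne_zero.2 hdet
    exact Matrix.vecMul_injective_iff_isUnit.2 hunit
      (hcv.trans (Matrix.zero_vecMul _).symm)
  -- deduce equality of weights on every value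
  have hw : ∀ v ∈ s, w v = wy v := by
    intro v hv
    have : (⟨v, hv⟩ : s) ∈ Set.range e := e.surjective ⟨v, hv⟩
    obtain ⟨i, hi⟩ := this
    have := congrFun hc0 i
    simp only [hc, Pi.zero_apply, sub_eq_zero] at this
    rwa [hi] at this
  -- deduce equality of fibers
  funext m
  have hv := hw (x m) (hxs m)
  have hfib : Finset.univ.filter (fun j => x j = x m)
      = Finset.univ.filter (fun j => y j = x m) := twoPow_sum_inj hv
  have hm : m ∈ Finset.univ.filter (fun j => x j = x m) := by simp
  rw [hfib] at hm
  exact ((Finset.mem_filter.1 hm).2).symm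

/-- **Kolmogorov–Arnold representation theorem.**
Let `M` be a positive integer and `f : [0,1]^M → ℝ`. Then `f` is continuous iff there
exist continuous functions `ρ : ℝ^(2M+1) → ℝ` and `φ : ℝ → ℝ^(2M+1)` and real
coefficients `λ₁, …, λ_M` such that for every `x ∈ [0,1]^M`,
`f x = ρ (∑ m, λ m • φ (x m))`, the scalar multiplication and sum being componentwise. -/
theorem kolmogorov_arnold_representation
    (M : ℕ) (hM : 0 < M)
    (f : (Fin M → Set.Icc (0 : ℝ) 1) → ℝ) :
    Continuous f ↔
      ∃ (ρ : (Fin (2 * M + 1) → ℝ) → ℝ) (φ : ℝ → (Fin (2 * M + 1) → ℝ))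
        (lam : Fin M → ℝ),
        Continuous ρ ∧ Continuous φ ∧
        ∀ x : Fin M → Set.Icc (0 : ℝ) 1,
          f x = ρ (∑ m : Fin M, lam m • φ ((x m : ℝ))) := by
  constructor
  · intro hf
    set φ : ℝ → (Fin (2 * M + 1) → ℝ) := fun t k => t ^ (k : ℕ) with hφ
    set lam : Fin M → ℝ := fun m => (2:ℝ) ^ (m : ℕ) with hlam
    set F : (Fin M → Set.Icc (0 : ℝ) 1) → (Fin (2 * M + 1) → ℝ) :=
      fun x => ∑ m : Fin M, lam m • φ ((x m : ℝ)) with hF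
    have hφc : Continuous φ := by
      apply continuous_pi
      intro k
      exact continuous_pow _
    have hFc : Continuous F := by
      apply continuous_finset_sum
      intro m _
      exact ((continuous_const : Continuous fun _ : Fin M → Set.Icc (0 : ℝ) 1 => lam m).smul (hφc.comp
        (continuous_subtype_val.comp (continuous_apply m : Continuous fun p : Fin M → Set.Icc (0 : ℝ) 1 => p m))))
    have hFapp : ∀ x (k : Fin (2 * M + 1)),
        F x k = ∑ m : Fin M, (2:ℝ) ^ (m : ℕ) * ((x m : ℝ)) ^ (k : ℕ) := by
      intro x k
      simp [hF, hlam, hφ, Finset.sum_apply]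
    have hFinj : Function.Injective F := by
      intro x y hxy
      have := moment_map_inj (fun m => ((x m : ℝ))) (fun m => ((y m : ℝ)))
        (fun k => by rw [← hFapp x k, ← hFapp y k, hxy])
      funext m
      exact Subtype.ext (congrFun this m)
    have hce : Topology.IsClosedEmbedding F := hFc.isClosedEmbedding hFinj
    obtain ⟨g, hg⟩ := (⟨f, hf⟩ : C((Fin M → Set.Icc (0 : ℝ) 1), ℝ)).exists_extension' hce
    exact ⟨g, φ, lam, g.continuous, hφc, fun x => (congrFun hg x).symm⟩
  · rintro ⟨ρ, φ, lam, hρ, hφ, hrep⟩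
    have : Continuous fun x : Fin M → Set.Icc (0 : ℝ) 1 =>
        ρ (∑ m : Fin M, lam m • φ ((x m : ℝ))) := by
      apply hρ.comp
      apply continuous_finset_sum
      intro m _
      exact (continuous_const : Continuous fun _ : Fin M → Set.Icc (0 : ℝ) 1 => lam m).smul (hφ.comp
        (continuous_subtype_val.comp (continuous_apply m : Continuous fun p : Fin M → Set.Icc (0 : ℝ) 1 => p m)))
    exact this.congr fun x => (hrep x).symm
end

section
/- Let d and M be positive integers, let K ⊆ ℝ^d be a compact set, and let f : K^M → ℝ be a continuous function that is permutation invariant, i.e., for every permutation σ of {1, …, M} and every (x₁, …, x_M) ∈ K^M one has f(x_{σ(1)}, …, x_{σ(M)}) = f(x₁, …, x_M). Then for every ε > 0 there exist a positive integer k and continuous functions φ : ℝ^d → ℝ^k and ρ : ℝ^k → ℝ such that for every (x₁, …, x_M) ∈ K^M, |f(x₁, …, x_M) − ρ(∑_{i=1}^{M} φ(x_i))| < ε. -/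
open MvPolynomial Finset

open MvPolynomial Finset

-- affine separator polynomial
lemma deepsets_lin (d : ℕ) (z w : Fin d → ℝ) (hzw : w ≠ z) :
    ∃ q : MvPolynomial (Fin d) ℝ, q.totalDegree ≤ 1 ∧ eval z q = 1 ∧ eval w q = 0 := by
  set a : Fin d → ℝ := fun j => z j - w j with ha
  have hane : ∑ j, a j ^ 2 ≠ 0 := by
    have hex : ∃ j, z j ≠ w j := by
      by_contra h
      push_neg at h
      exact hzw (funext fun j => (h j).symm)
    obtain ⟨j, hj⟩ := hex
    have haj : a j ≠ 0 := by simpa [ha, sub_eq_zero] using hj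
    have hpos : (0:ℝ) < ∑ j, a j ^ 2 := by
      apply Finset.sum_pos' (fun i _ => sq_nonneg _)
      exact ⟨j, Finset.mem_univ j, by positivity⟩
    exact ne_of_gt hpos
  set c : ℝ := (∑ j, a j ^ 2)⁻¹ with hc
  refine ⟨C c * ∑ j, C (a j) * (X j - C (w j)), ?_, ?_, ?_⟩
  · calc (C c * ∑ j, C (a j) * (X j - C (w j))).totalDegree
        ≤ (C c).totalDegree + (∑ j : Fin d, C (a j) * (X j - C (w j))).totalDegree :=
          totalDegree_mul _ _
      _ ≤ 0 + 1 := by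
          refine add_le_add (le_of_eq (totalDegree_C _)) ?_
          refine le_trans (totalDegree_finset_sum _ _) ?_
          refine Finset.sup_le fun j _ => ?_
          calc (C (a j) * (X j - C (w j))).totalDegree
              ≤ (C (a j)).totalDegree + (X j - C (w j)).totalDegree := totalDegree_mul _ _
            _ ≤ 0 + 1 := by
                refine add_le_add (le_of_eq (totalDegree_C _)) ?_
                rw [sub_eq_add_neg]
                refine le_trans (totalDegree_add _ _) ?_
                simp [totalDegree_X]
      _ = 1 := by norm_num
  · simp only [map_mul, map_sum, eval_C, eval_X, map_sub]
    have : ∑ j, a j * (z j - w j) = ∑ j, a j ^ 2 := by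
      apply Finset.sum_congr rfl
      intro j _
      rw [ha]; ring
    rw [this]
    field_simp [hc]
    rw [hc, inv_mul_cancel₀ hane]
  · simp only [map_mul, map_sum, eval_C, eval_X, map_sub]
    have : ∑ j, a j * (w j - w j) = 0 := by simp
    rw [this, mul_zero]

lemma deepsets_moment_inj (d M : ℕ) (x y : Fin M → (Fin d → ℝ))
    (h : ∀ α : Fin d → Fin (2*M+1),
      ∑ i, ∏ j, x i j ^ (α j : ℕ) = ∑ i, ∏ j, y i j ^ (α j : ℕ)) :
    ∃ σ : Equiv.Perm (Fin M), ∀ i, y (σ i) = x i := by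
  classical
  -- Step A: transfer to all polynomials of total degree ≤ 2M
  have key : ∀ q : MvPolynomial (Fin d) ℝ, q.totalDegree ≤ 2*M →
      ∑ i, eval (x i) q = ∑ i, eval (y i) q := by
    intro q hq
    have hαj : ∀ α : Fin d →₀ ℕ, α ∈ q.support → ∀ j, α j < 2*M+1 := by
      intro α hα j
      have h1 : α j ≤ α.sum fun _ e => e := by
        by_cases h0 : α j = 0
        · simp [h0]
        · exact Finset.single_le_sum (f := fun k => α k) (fun _ _ => Nat.zero_le _)
            (Finsupp.mem_support_iff.mpr h0)
      have h2 := MvPolynomial.le_totalDegree hα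
      omega
    simp only [eval_eq']
    rw [Finset.sum_comm, Finset.sum_comm (s := univ)]
    apply Finset.sum_congr rfl
    intro α hα
    simp only [← Finset.mul_sum]
    congr 1
    have := h (fun j => ⟨α j, hαj α hα j⟩)
    simpa using this
  -- Step B: counts of each fiber agree
  have hcount : ∀ z : Fin d → ℝ,
      (univ.filter fun i => x i = z).card = (univ.filter fun i => y i = z).card := by
    intro z
    set T : Finset (Fin d → ℝ) := (Finset.image x univ ∪ Finset.image y univ).erase z with hT
    choose ℓ hℓdeg hℓz hℓw using fun (w : {w : Fin d → ℝ // w ≠ z}) => deepsets_lin d z w.1 w.2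
    set q : MvPolynomial (Fin d) ℝ :=
      ∏ w ∈ T.attach, ℓ ⟨w.1, Finset.ne_of_mem_erase w.2⟩ with hq
    have hqdeg : q.totalDegree ≤ 2*M := by
      refine le_trans (totalDegree_finset_prod _ _) ?_
      refine le_trans (Finset.sum_le_card_nsmul _ _ 1 fun w _ => hℓdeg _) ?_
      simp only [smul_eq_mul, mul_one, Finset.card_attach]
      calc T.card ≤ (Finset.image x univ ∪ Finset.image y univ).card := Finset.card_erase_le
        _ ≤ (Finset.image x univ).card + (Finset.image y univ).card := Finset.card_union_le _ _
        _ ≤ M + M := add_le_add (le_trans Finset.card_image_le (by simp))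
            (le_trans Finset.card_image_le (by simp))
        _ = 2*M := by ring
    have hevq : ∀ u : Fin d → ℝ, (u ∈ Finset.image x univ ∪ Finset.image y univ) →
        eval u q = if u = z then 1 else 0 := by
      intro u hu
      by_cases huz : u = z
      · subst huz
        simp only [if_pos rfl, hq, map_prod]
        exact Finset.prod_eq_one fun w _ => hℓz _
      · rw [if_neg huz]
        have huT : u ∈ T := Finset.mem_erase.mpr ⟨huz, hu⟩
        rw [hq, map_prod]
        refine Finset.prod_eq_zero (Finset.mem_attach _ ⟨u, huT⟩) ?_
        exact hℓw ⟨u, huz⟩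
    have hx : ∑ i, eval (x i) q = ((univ.filter fun i => x i = z).card : ℝ) := by
      rw [Finset.card_filter]
      push_cast
      refine Finset.sum_congr rfl fun i _ => ?_
      rw [hevq (x i) (Finset.mem_union_left _ (Finset.mem_image_of_mem x (mem_univ i)))]
    have hy : ∑ i, eval (y i) q = ((univ.filter fun i => y i = z).card : ℝ) := by
      rw [Finset.card_filter]
      push_cast
      refine Finset.sum_congr rfl fun i _ => ?_
      rw [hevq (y i) (Finset.mem_union_right _ (Finset.mem_image_of_mem y (mem_univ i)))]
    have := key q hqdeg
    rw [hx, hy] at this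
    exact_mod_cast this
  -- Step C: build the permutation
  have hfib : ∀ z, Fintype.card {i // x i = z} = Fintype.card {i // y i = z} := by
    intro z
    rw [Fintype.card_subtype, Fintype.card_subtype]
    exact hcount z
  exact ⟨Equiv.ofFiberEquiv (f := x) (g := y) fun z => Fintype.equivOfCardEq (hfib z),
    fun i => Equiv.ofFiberEquiv_map _ i⟩

/-- **DeepSets universal approximation theorem.**
Let `d, M` be positive integers, `K ⊆ ℝ^d` compact, and `f : K^M → ℝ` a continuous
permutation-invariant function. Then for every `ε > 0` there exist `k ≥ 1` and
continuous functions `φ : ℝ^d → ℝ^k` and `ρ : ℝ^k → ℝ` such that for all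
`(x₁, …, x_M) ∈ K^M`, `|f x - ρ (∑ i, φ (x i))| < ε`. -/
theorem deepsets_universal_approximation
    (d M : ℕ) (hd : 0 < d) (hM : 0 < M)
    (K : Set (Fin d → ℝ)) (hK : IsCompact K)
    (f : (Fin M → (Fin d → ℝ)) → ℝ)
    (hf_cont : ContinuousOn f {x | ∀ i, x i ∈ K})
    (hf_perm : ∀ (σ : Equiv.Perm (Fin M)) (x : Fin M → (Fin d → ℝ)),
      (∀ i, x i ∈ K) → f (fun i => x (σ i)) = f x) :
    ∀ ε > (0 : ℝ),
      ∃ (k : ℕ) (_ : 0 < k)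
        (φ : (Fin d → ℝ) → (Fin k → ℝ)) (ρ : (Fin k → ℝ) → ℝ),
        Continuous φ ∧ Continuous ρ ∧
        ∀ x : Fin M → (Fin d → ℝ), (∀ i, x i ∈ K) →
          |f x - ρ (∑ i : Fin M, φ (x i))| < ε := by
  classical
  intro ε hε
  set ι := (Fin d → Fin (2*M+1)) with hι
  set φ0 : (Fin d → ℝ) → ι → ℝ := fun u α => ∏ j, u j ^ (α j : ℕ) with hφ0
  set S : (Fin M → (Fin d → ℝ)) → ι → ℝ := fun x => ∑ i, φ0 (x i) with hS
  set X : Set (Fin M → (Fin d → ℝ)) := {x | ∀ i, x i ∈ K} with hX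
  have hXc : IsCompact X := by
    have : X = Set.univ.pi (fun _ : Fin M => K) := by
      ext x; simp [hX, Set.mem_pi]
    rw [this]
    exact isCompact_univ_pi fun _ => hK
  have hφ0cont : Continuous φ0 := by
    refine continuous_pi fun α => ?_
    exact continuous_finset_prod _ fun j _ => (continuous_apply j).pow _
  have hScont : Continuous S := by
    refine continuous_finset_sum _ fun i _ => ?_
    exact hφ0cont.comp (continuous_apply i)
  set Y : Set (ι → ℝ) := S '' X with hY
  have hYc : IsCompact Y := hXc.image hScont
  have hYclosed : IsClosed Y := hYc.isClosed
  -- fiber constancy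
  have hSval : ∀ (x : Fin M → (Fin d → ℝ)) (α : ι), S x α = ∑ i, ∏ j, x i j ^ (α j : ℕ) := by
    intro x α
    rw [hS]
    simp [hφ0, Finset.sum_apply]
  have hconst : ∀ x ∈ X, ∀ x' ∈ X, S x = S x' → f x = f x' := by
    intro x hx x' hx' hss
    obtain ⟨σ, hσ⟩ := deepsets_moment_inj d M x x' (by
      intro α
      have := congrFun hss α
      rw [hSval, hSval] at this
      exact this)
    have hcomp : (fun i => x' (σ i)) = x := funext fun i => hσ i
    have := hf_perm σ x' hx'
    rw [hcomp] at this
    exact this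
  -- define g on Y by factoring f through S
  set g : (ι → ℝ) → ℝ := fun v => if h : ∃ x, x ∈ X ∧ S x = v then f h.choose else 0 with hg
  have hgval : ∀ x ∈ X, g (S x) = f x := by
    intro x hx
    have h : ∃ x', x' ∈ X ∧ S x' = S x := ⟨x, hx, rfl⟩
    rw [hg]
    simp only [dif_pos h]
    exact hconst h.choose h.choose_spec.1 x hx h.choose_spec.2
  have hgcont : ContinuousOn g Y := by
    rw [continuousOn_iff']
    intro t ht
    set C : Set (Fin M → (Fin d → ℝ)) := X ∩ f ⁻¹' tᶜ with hC
    have hCclosed : IsClosed C := hf_cont.preimage_isClosed_of_isClosed hXc.isClosed ht.isClosed_compl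
    have hCc : IsCompact C := hXc.of_isClosed_subset hCclosed Set.inter_subset_left
    refine ⟨(S '' C)ᶜ, (hCc.image hScont).isClosed.isOpen_compl, ?_⟩
    ext v
    simp only [Set.mem_inter_iff, Set.mem_preimage, Set.mem_compl_iff]
    constructor
    · rintro ⟨hvt, hvY⟩
      refine ⟨?_, hvY⟩
      rintro ⟨x, ⟨hxX, hxt⟩, hsv⟩
      rw [← hsv, hgval x hxX] at hvt
      exact hxt hvt
    · rintro ⟨hvc, hvY⟩
      refine ⟨?_, hvY⟩
      obtain ⟨x, hxX, hsv⟩ := hvY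
      rw [← hsv, hgval x hxX]
      by_contra hft
      exact hvc ⟨x, ⟨hxX, hft⟩, hsv⟩
  -- Tietze extension
  obtain ⟨P, hP⟩ := ContinuousMap.exists_restrict_eq (Y := ℝ) hYclosed ⟨Y.restrict g, hgcont.restrict⟩
  have hPval : ∀ v ∈ Y, P v = g v := by
    intro v hv
    have := congrFun (congrArg ContinuousMap.toFun hP) ⟨v, hv⟩
    exact this
  -- reindex to Fin k
  set k := Fintype.card ι with hk
  have hkpos : 0 < k := Fintype.card_pos_iff.mpr ⟨fun _ => ⟨0, Nat.succ_pos _⟩⟩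
  set e : ι ≃ Fin k := Fintype.equivFin ι with he
  refine ⟨k, hkpos, fun u m => φ0 u (e.symm m), fun v => P (fun α => v (e α)), ?_, ?_, ?_⟩
  · exact continuous_pi fun m => (continuous_apply (e.symm m)).comp hφ0cont
  · exact P.continuous.comp (continuous_pi fun α => continuous_apply (e α))
  · intro x hx
    have hxX : x ∈ X := hx
    have hre : (fun α => (∑ i : Fin M, fun m => φ0 (x i) (e.symm m)) (e α)) = S x := by
      funext α
      rw [Finset.sum_apply, hS]
      simp [Finset.sum_apply]
    show |f x - P fun α => (∑ i : Fin M, fun m => φ0 (x i) (e.symm m)) (e α)| < ε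
    rw [hre, hPval (S x) ⟨x, hxX, rfl⟩, hgval x hxX]
    simpa using hε
end
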